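/- arXiv:2311.02194 — 5 statements merged into one kernel-verified Lean document; each statement's English description precedes it below -/
import Mathlib

section
/- For every ν : S → ℝ, L(ν) − 𝓛̃(ν) = α·( Z(ν)/exp(1) − log Z(ν) ) ≥ 0; in particular L(ν) ≥ 𝓛̃(ν), and equality holds if and only if Z(ν) = exp(1) (Euler's number). -/
lemma key_ineq {z : ℝ} (hz : 0 < z) : Real.log z ≤ z / Real.exp 1 := by
  have h := Real.log_le_sub_one_of_pos (x := z / Real.exp 1)
    (div_pos hz (Real.exp_pos 1))
  rw [Real.log_div (ne_of_gt hz) (Real.exp_ne_zero 1), Real.log_exp] at h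
  linarith

lemma key_strict {z : ℝ} (hz : 0 < z) (hne : z ≠ Real.exp 1) :
    Real.log z < z / Real.exp 1 := by
  have hne' : z / Real.exp 1 ≠ 1 := by
    intro h
    exact hne (by field_simp at h; linarith)
  have h := Real.log_lt_sub_one_of_pos (div_pos hz (Real.exp_pos 1)) hne'
  rw [Real.log_div (ne_of_gt hz) (Real.exp_ne_zero 1), Real.log_exp] at h
  linarith

/-- For every `ν`, `L(ν) - 𝓛̃(ν) = α·(Z(ν)/exp 1 - log Z(ν)) ≥ 0`; in particular `L(ν) ≥ 𝓛̃(ν)`, with equality iff `Z(ν) = exp 1`. -/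
theorem stmt_8 {S X : Type*} [Fintype S] [Fintype X] [Nonempty S] [Nonempty X]
    (α γ : ℝ) (hα : 0 < α) (hγ0 : 0 < γ) (hγ1 : γ < 1)
    (c : X → ℝ) (hc : ∀ x, 0 ≤ c x) (hc0 : ∃ x₀, 0 < c x₀)
    (st st' : X → S) (e₀ : X → ℝ)
    (p₀ : S → ℝ) (hp₀ : ∀ s, 0 ≤ p₀ s) (hp₀sum : ∑ s, p₀ s = 1)
    (ehat : (S → ℝ) → X → ℝ)
    (hehat : ∀ (ν : S → ℝ) (x : X), ehat ν x = e₀ x + γ * ν (st' x) - ν (st x))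
    (Z : (S → ℝ) → ℝ)
    (hZ : ∀ ν : S → ℝ, Z ν = ∑ x, c x * Real.exp (ehat ν x / α))
    (L : (S → ℝ) → ℝ)
    (hL : ∀ ν : S → ℝ,
      L ν = (1 - γ) * ∑ s, p₀ s * ν s + α * ∑ x, c x * Real.exp (ehat ν x / α - 1))
    (Ltil : (S → ℝ) → ℝ)
    (hLtil : ∀ ν : S → ℝ,
      Ltil ν = (1 - γ) * ∑ s, p₀ s * ν s + α * Real.log (Z ν)) :
    ∀ ν : S → ℝ,
      L ν - Ltil ν = α * (Z ν / Real.exp 1 - Real.log (Z ν)) ∧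
      0 ≤ α * (Z ν / Real.exp 1 - Real.log (Z ν)) ∧
      Ltil ν ≤ L ν ∧
      (L ν = Ltil ν ↔ Z ν = Real.exp 1) := by
  intro ν
  -- Z ν > 0
  have hZpos : 0 < Z ν := by
    rw [hZ]
    obtain ⟨x₀, hx₀⟩ := hc0
    apply Finset.sum_pos' (fun x _ => mul_nonneg (hc x) (Real.exp_pos _).le)
    exact ⟨x₀, Finset.mem_univ x₀, mul_pos hx₀ (Real.exp_pos _)⟩
  have hsum : ∑ x, c x * Real.exp (ehat ν x / α - 1) = Z ν / Real.exp 1 := by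
    rw [hZ, Finset.sum_div]
    apply Finset.sum_congr rfl
    intro x _
    rw [Real.exp_sub, mul_div_assoc]
  have hdiff : L ν - Ltil ν = α * (Z ν / Real.exp 1 - Real.log (Z ν)) := by
    rw [hL, hLtil, hsum]; ring
  have hineq : 0 ≤ α * (Z ν / Real.exp 1 - Real.log (Z ν)) := by
    have := key_ineq hZpos
    nlinarith
  refine ⟨hdiff, hineq, by linarith, ?_⟩
  constructor
  · intro h
    by_contra hne
    have := key_strict hZpos hne
    have : L ν - Ltil ν > 0 := by rw [hdiff]; nlinarith
    linarith
  · intro h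
    have : Real.log (Z ν) = Z ν / Real.exp 1 := by
      rw [h, Real.log_exp, div_self (Real.exp_ne_zero 1)]
    have : L ν - Ltil ν = 0 := by rw [hdiff, this]; ring
    linarith
end

section
/- If ν̃* : S → ℝ is a global minimizer of 𝓛̃ (i.e., 𝓛̃(ν̃*) ≤ 𝓛̃(ν) for all ν : S → ℝ), then the shifted function ν̂ := ν̃* + C*, where C* := (α/(1−γ))·(log Z(ν̃*) − 1), is a global minimizer of L: L(ν̂) ≤ L(ν) for all ν : S → ℝ. -/
/-- If `ν̃*` is a global minimizer of `𝓛̃`, then `ν̂ := ν̃* + C*` with `C* := (α/(1-γ))·(log Z(ν̃*) - 1)` is a global minimizer of `L`. -/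
theorem stmt_10 {S X : Type*} [Fintype S] [Fintype X] [Nonempty S] [Nonempty X]
    (α γ : ℝ) (hα : 0 < α) (hγ0 : 0 < γ) (hγ1 : γ < 1)
    (c : X → ℝ) (hc : ∀ x, 0 ≤ c x) (hc0 : ∃ x₀, 0 < c x₀)
    (st st' : X → S) (e₀ : X → ℝ)
    (p₀ : S → ℝ) (hp₀ : ∀ s, 0 ≤ p₀ s) (hp₀sum : ∑ s, p₀ s = 1)
    (ehat : (S → ℝ) → X → ℝ)
    (hehat : ∀ (ν : S → ℝ) (x : X), ehat ν x = e₀ x + γ * ν (st' x) - ν (st x))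
    (Z : (S → ℝ) → ℝ)
    (hZ : ∀ ν : S → ℝ, Z ν = ∑ x, c x * Real.exp (ehat ν x / α))
    (L : (S → ℝ) → ℝ)
    (hL : ∀ ν : S → ℝ,
      L ν = (1 - γ) * ∑ s, p₀ s * ν s + α * ∑ x, c x * Real.exp (ehat ν x / α - 1))
    (Ltil : (S → ℝ) → ℝ)
    (hLtil : ∀ ν : S → ℝ,
      Ltil ν = (1 - γ) * ∑ s, p₀ s * ν s + α * Real.log (Z ν))
    (νtil : S → ℝ) (hνtil : ∀ ν : S → ℝ, Ltil νtil ≤ Ltil ν) :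
    ∀ ν : S → ℝ,
      L (fun s => νtil s + (α / (1 - γ)) * (Real.log (Z νtil) - 1)) ≤ L ν := by
  intro ν
  have hγ : (0:ℝ) < 1 - γ := by linarith
  set C : ℝ := (α / (1 - γ)) * (Real.log (Z νtil) - 1) with hCdef
  have hZpos : ∀ w : S → ℝ, 0 < Z w := by
    intro w
    rw [hZ]
    obtain ⟨x₀, hx₀⟩ := hc0
    apply Finset.sum_pos'
    · intro x _
      have := hc x
      positivity
    · exact ⟨x₀, Finset.mem_univ _, by positivity⟩
  have key2 : ∀ w, Ltil w ≤ L w := by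
    intro w
    rw [hLtil, hL]
    have h1 : ∑ x, c x * Real.exp (ehat w x / α - 1) = Z w * Real.exp (-1) := by
      rw [hZ, Finset.sum_mul]
      apply Finset.sum_congr rfl
      intro x _
      rw [mul_assoc, ← Real.exp_add]
      ring_nf
    rw [h1]
    have hz := hZpos w
    have hlog : Real.log (Z w) ≤ Z w * Real.exp (-1) := by
      have h2 : Real.log (Z w * Real.exp (-1)) ≤ Z w * Real.exp (-1) - 1 :=
        Real.log_le_sub_one_of_pos (by positivity)
      rw [Real.log_mul (ne_of_gt hz) (Real.exp_ne_zero _), Real.log_exp] at h2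
      linarith
    have := mul_le_mul_of_nonneg_left hlog (le_of_lt hα)
    linarith
  have key1 : L (fun s => νtil s + C) = Ltil νtil := by
    rw [hL, hLtil]
    have hlin : ∑ s, p₀ s * (νtil s + C) = (∑ s, p₀ s * νtil s) + C := by
      simp only [mul_add, Finset.sum_add_distrib, ← Finset.sum_mul, hp₀sum, one_mul]
    have hzt := hZpos νtil
    have hsum : ∑ x, c x * Real.exp (ehat (fun s => νtil s + C) x / α - 1) = 1 := by
      have hterm : ∀ x, ehat (fun s => νtil s + C) x / α - 1
          = ehat νtil x / α + (-Real.log (Z νtil)) := by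
        intro x
        rw [hehat, hehat]
        have hC : (γ - 1) * C = -α * (Real.log (Z νtil) - 1) := by
          rw [hCdef]
          field_simp
          ring
        have hαne : α ≠ 0 := ne_of_gt hα
        field_simp
        nlinarith [hC]
      have : ∀ x, c x * Real.exp (ehat (fun s => νtil s + C) x / α - 1)
          = (c x * Real.exp (ehat νtil x / α)) * Real.exp (-Real.log (Z νtil)) := by
        intro x
        rw [hterm x, Real.exp_add]
        ring
      rw [Finset.sum_congr rfl (fun x _ => this x), ← Finset.sum_mul, ← hZ,
        Real.exp_neg, Real.exp_log hzt]
      field_simp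
    rw [hlin, hsum, hCdef]
    field_simp
    ring
  calc L (fun s => νtil s + C) = Ltil νtil := key1
    _ ≤ Ltil ν := hνtil ν
    _ ≤ L ν := key2 ν
end

section
/- If ν* : S → ℝ is a global minimizer of L (i.e., L(ν*) ≤ L(ν) for all ν : S → ℝ), then ν* is also a global minimizer of 𝓛̃: 𝓛̃(ν*) ≤ 𝓛̃(ν) for all ν : S → ℝ. -/
/-!
On every line `ν + C` the objective `L` is, up to the common term `(1 - γ) ∑ p₀ ν`, the function
`a ↦ a + α Z(ν) exp(-a/α - 1)` of `a = (1 - γ) C`, since shifting `ν` by `C` lowers every advantage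
by `a`. The minimum of this function over `a` is `α log Z(ν)`, attained at `a = α log Z(ν) - α`.
Hence `𝓛̃ ≤ L` everywhere, while every value of `𝓛̃` is a value of `L`; so a minimizer of `L`
minimizes `𝓛̃`.
-/

open Real

theorem isLeast_range_add_mul_exp {α z : ℝ} (hα : 0 < α) (hz : 0 < z) :
    IsLeast (Set.range fun a => a + α * (z * exp (-a / α - 1))) (α * log z) := by
  refine ⟨⟨α * log z - α, ?_⟩, ?_⟩
  · have hexp : -(α * log z - α) / α - 1 = -log z := by field_simp; ring
    simp only [hexp, exp_neg, exp_log hz]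
    field_simp
    ring
  · rintro _ ⟨a, rfl⟩
    have key : log z + (-a / α - 1) + 1 ≤ z * exp (-a / α - 1) := by
      simpa only [exp_add, exp_log hz] using add_one_le_exp (log z + (-a / α - 1))
    calc α * log z = a + α * (log z + (-a / α - 1) + 1) := by field_simp; ring
      _ ≤ _ := add_le_add_right (mul_le_mul_of_nonneg_left key hα.le) a

theorem Finset.sum_mul_exp_pos {X : Type*} [Fintype X] {c : X → ℝ} (hc : ∀ x, 0 ≤ c x)
    (hc0 : ∃ x, 0 < c x) (f : X → ℝ) : 0 < ∑ x, c x * exp (f x) := by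
  obtain ⟨x₀, hx₀⟩ := hc0
  exact Finset.sum_pos' (fun x _ => mul_nonneg (hc x) (exp_pos _).le)
    ⟨x₀, Finset.mem_univ _, mul_pos hx₀ (exp_pos _)⟩

theorem stmt_11_general {S X : Type*} [Fintype S] [Fintype X]
    (α γ : ℝ) (hα : 0 < α) (hγ1 : γ < 1)
    (c : X → ℝ) (hc : ∀ x, 0 ≤ c x) (hc0 : ∃ x₀, 0 < c x₀)
    (st st' : X → S) (e₀ : X → ℝ)
    (p₀ : S → ℝ) (hp₀sum : ∑ s, p₀ s = 1)
    (ehat : (S → ℝ) → X → ℝ)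
    (hehat : ∀ (ν : S → ℝ) (x : X), ehat ν x = e₀ x + γ * ν (st' x) - ν (st x))
    (Z : (S → ℝ) → ℝ)
    (hZ : ∀ ν : S → ℝ, Z ν = ∑ x, c x * Real.exp (ehat ν x / α))
    (L : (S → ℝ) → ℝ)
    (hL : ∀ ν : S → ℝ,
      L ν = (1 - γ) * ∑ s, p₀ s * ν s + α * ∑ x, c x * Real.exp (ehat ν x / α - 1))
    (Ltil : (S → ℝ) → ℝ)
    (hLtil : ∀ ν : S → ℝ,
      Ltil ν = (1 - γ) * ∑ s, p₀ s * ν s + α * Real.log (Z ν))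
    (νstar : S → ℝ) (hνstar : ∀ ν : S → ℝ, L νstar ≤ L ν) :
    ∀ ν : S → ℝ, Ltil νstar ≤ Ltil ν := by
  have hZpos (ν : S → ℝ) : 0 < Z ν := hZ ν ▸ Finset.sum_mul_exp_pos hc hc0 _
  have hL_shift (ν : S → ℝ) (C : ℝ) : L (fun s => ν s + C) = (1 - γ) * ∑ s, p₀ s * ν s +
      ((1 - γ) * C + α * (Z ν * exp (-((1 - γ) * C) / α - 1))) := by
    have hexp (x : X) :
        ehat (fun s => ν s + C) x / α - 1 = ehat ν x / α + (-((1 - γ) * C) / α - 1) := by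
      rw [hehat, hehat]
      ring
    have hp₀_shift : ∑ s, p₀ s * (ν s + C) = ∑ s, p₀ s * ν s + C := by
      simp only [mul_add, Finset.sum_add_distrib, ← Finset.sum_mul, hp₀sum, one_mul]
    simp only [hL, hZ, hexp, exp_add, hp₀_shift, Finset.sum_mul, mul_assoc]
    ring
  have hLtil_le_L (μ : S → ℝ) : Ltil μ ≤ L μ := by
    have h := (isLeast_range_add_mul_exp hα (hZpos μ)).2 ⟨0, rfl⟩
    have h0 := hL_shift μ 0
    simp only [add_zero, mul_zero, neg_zero, zero_div, zero_sub] at h h0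
    rw [hLtil, h0]
    gcongr
  have hLtil_eq_L (ν : S → ℝ) : ∃ C, L (fun s => ν s + C) = Ltil ν := by
    obtain ⟨a, ha⟩ := (isLeast_range_add_mul_exp hα (hZpos ν)).1
    refine ⟨a / (1 - γ), ?_⟩
    rw [hL_shift, mul_div_cancel₀ a (by linarith), hLtil, ← ha]
  intro ν
  obtain ⟨C, hC⟩ := hLtil_eq_L ν
  exact (hLtil_le_L νstar).trans ((hνstar _).trans hC.le)

/-- If `ν*` is a global minimizer of `L`, then `ν*` is also a global minimizer of `𝓛̃`. -/
theorem stmt_11 {S X : Type*} [Fintype S] [Fintype X] [Nonempty S] [Nonempty X]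
    (α γ : ℝ) (hα : 0 < α) (hγ0 : 0 < γ) (hγ1 : γ < 1)
    (c : X → ℝ) (hc : ∀ x, 0 ≤ c x) (hc0 : ∃ x₀, 0 < c x₀)
    (st st' : X → S) (e₀ : X → ℝ)
    (p₀ : S → ℝ) (hp₀ : ∀ s, 0 ≤ p₀ s) (hp₀sum : ∑ s, p₀ s = 1)
    (ehat : (S → ℝ) → X → ℝ)
    (hehat : ∀ (ν : S → ℝ) (x : X), ehat ν x = e₀ x + γ * ν (st' x) - ν (st x))
    (Z : (S → ℝ) → ℝ)
    (hZ : ∀ ν : S → ℝ, Z ν = ∑ x, c x * Real.exp (ehat ν x / α))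
    (L : (S → ℝ) → ℝ)
    (hL : ∀ ν : S → ℝ,
      L ν = (1 - γ) * ∑ s, p₀ s * ν s + α * ∑ x, c x * Real.exp (ehat ν x / α - 1))
    (Ltil : (S → ℝ) → ℝ)
    (hLtil : ∀ ν : S → ℝ,
      Ltil ν = (1 - γ) * ∑ s, p₀ s * ν s + α * Real.log (Z ν))
    (νstar : S → ℝ) (hνstar : ∀ ν : S → ℝ, L νstar ≤ L ν) :
    ∀ ν : S → ℝ, Ltil νstar ≤ Ltil ν :=
  stmt_11_general α γ hα hγ1 c hc hc0 st st' e₀ p₀ hp₀sum ehat hehat Z hZ L hL Ltil hLtil νstar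
    hνstar
end

section
/- If ν* : S → ℝ is a global minimizer of L and ν̃* : S → ℝ is a global minimizer of 𝓛̃, then the optimal objective values coincide: L(ν*) = 𝓛̃(ν̃*). -/
/-!
Both objectives share the linear term `(1 - γ) ∑ p₀ ν`, and `L ν` replaces the `α log Z(ν)` of
`𝓛̃ ν` by `α Z(ν) / e`, which is larger since `log z ≤ z / e`; hence `𝓛̃ ≤ L`. Conversely,
shifting `ν` by a constant `C` adds `(1 - γ) C` to the linear term and multiplies `Z(ν)` by
`exp (-(1 - γ) C / α)`, and the choice `(1 - γ) C = α (log Z(ν̃) - 1)` makes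
`L (ν̃ + C) = 𝓛̃ ν̃`. So `min L ≤ min 𝓛̃ ≤ min L`.
-/

open Finset Real

lemma Real.log_le_mul_exp_neg_one {z : ℝ} (hz : 0 < z) : log z ≤ z * exp (-1) := by
  have h := log_le_sub_one_of_pos (mul_pos hz (exp_pos (-1)))
  rw [log_mul hz.ne' (exp_ne_zero _), log_exp] at h
  linarith

noncomputable section Objectives

variable {S X : Type*}

def advantage (γ : ℝ) (st st' : X → S) (e₀ : X → ℝ) (ν : S → ℝ) (x : X) : ℝ :=
  e₀ x + γ * ν (st' x) - ν (st x)

def partitionValue [Fintype X] (α γ : ℝ) (c : X → ℝ) (st st' : X → S) (e₀ : X → ℝ)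
    (ν : S → ℝ) : ℝ :=
  ∑ x, c x * exp (advantage γ st st' e₀ ν x / α)

def objective [Fintype S] [Fintype X] (α γ : ℝ) (c : X → ℝ) (st st' : X → S) (e₀ : X → ℝ)
    (p₀ : S → ℝ) (ν : S → ℝ) : ℝ :=
  (1 - γ) * ∑ s, p₀ s * ν s + α * ∑ x, c x * exp (advantage γ st st' e₀ ν x / α - 1)

def logObjective [Fintype S] [Fintype X] (α γ : ℝ) (c : X → ℝ) (st st' : X → S) (e₀ : X → ℝ)
    (p₀ : S → ℝ) (ν : S → ℝ) : ℝ :=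
  (1 - γ) * ∑ s, p₀ s * ν s + α * log (partitionValue α γ c st st' e₀ ν)

variable {α γ : ℝ} {c : X → ℝ} {st st' : X → S} {e₀ : X → ℝ} {p₀ : S → ℝ}

lemma advantage_add_const (ν : S → ℝ) (C : ℝ) (x : X) :
    advantage γ st st' e₀ (ν + fun _ => C) x = advantage γ st st' e₀ ν x - (1 - γ) * C := by
  simp only [advantage, Pi.add_apply]
  ring

section

variable [Fintype X]

lemma partitionValue_add_const (ν : S → ℝ) (C : ℝ) :
    partitionValue α γ c st st' e₀ (ν + fun _ => C) =
      exp (-((1 - γ) * C) / α) * partitionValue α γ c st st' e₀ ν := by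
  simp only [partitionValue, advantage_add_const, mul_sum]
  refine sum_congr rfl fun x _ => ?_
  rw [sub_div, sub_eq_add_neg, ← neg_div, exp_add]
  ring

lemma partitionValue_pos (hc : ∀ x, 0 ≤ c x) (hc0 : ∃ x₀, 0 < c x₀) (ν : S → ℝ) :
    0 < partitionValue α γ c st st' e₀ ν := by
  obtain ⟨x₀, hx₀⟩ := hc0
  exact sum_pos' (fun x _ => mul_nonneg (hc x) (exp_pos _).le)
    ⟨x₀, mem_univ _, mul_pos hx₀ (exp_pos _)⟩

variable [Fintype S]

lemma objective_eq (ν : S → ℝ) :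
    objective α γ c st st' e₀ p₀ ν =
      (1 - γ) * ∑ s, p₀ s * ν s + α * (exp (-1) * partitionValue α γ c st st' e₀ ν) := by
  have h (x : X) : c x * exp (advantage γ st st' e₀ ν x / α - 1) =
      exp (-1) * (c x * exp (advantage γ st st' e₀ ν x / α)) := by
    rw [sub_eq_add_neg, exp_add]
    ring
  simp only [objective, partitionValue, h, mul_sum]

lemma logObjective_le_objective (hα : 0 < α) (hc : ∀ x, 0 ≤ c x) (hc0 : ∃ x₀, 0 < c x₀)
    (ν : S → ℝ) : logObjective α γ c st st' e₀ p₀ ν ≤ objective α γ c st st' e₀ p₀ ν := by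
  rw [objective_eq, logObjective, mul_comm (exp (-1))]
  gcongr
  exact log_le_mul_exp_neg_one (partitionValue_pos hc hc0 ν)

lemma objective_add_const_eq_logObjective (hα : 0 < α) (hc : ∀ x, 0 ≤ c x)
    (hc0 : ∃ x₀, 0 < c x₀) (hp₀sum : ∑ s, p₀ s = 1) (ν : S → ℝ) {C : ℝ}
    (hC : (1 - γ) * C = α * (log (partitionValue α γ c st st' e₀ ν) - 1)) :
    objective α γ c st st' e₀ p₀ (ν + fun _ => C) = logObjective α γ c st st' e₀ p₀ ν := by
  have hZ := partitionValue_pos (α := α) (γ := γ) (st := st) (st' := st') (e₀ := e₀) hc hc0 ν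
  have hlin : ∑ s, p₀ s * (ν + fun _ => C : S → ℝ) s = ∑ s, p₀ s * ν s + C := by
    simp only [Pi.add_apply, mul_add, sum_add_distrib, ← sum_mul, hp₀sum, one_mul]
  have hexp : exp (-1) * (exp (-((1 - γ) * C) / α) * partitionValue α γ c st st' e₀ ν) = 1 := by
    rw [← mul_assoc, ← exp_add, hC,
      show -1 + -(α * (log (partitionValue α γ c st st' e₀ ν) - 1)) / α =
        -log (partitionValue α γ c st st' e₀ ν) by field_simp; ring,
      exp_neg, exp_log hZ, inv_mul_cancel₀ hZ.ne']
  rw [objective_eq, partitionValue_add_const, hlin, logObjective]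
  linear_combination hC + α * hexp

end

end Objectives

theorem stmt_12_general {S X : Type*} [Fintype S] [Fintype X]
    (α γ : ℝ) (hα : 0 < α) (hγ1 : γ < 1)
    (c : X → ℝ) (hc : ∀ x, 0 ≤ c x) (hc0 : ∃ x₀, 0 < c x₀)
    (st st' : X → S) (e₀ : X → ℝ)
    (p₀ : S → ℝ) (hp₀sum : ∑ s, p₀ s = 1)
    (ehat : (S → ℝ) → X → ℝ)
    (hehat : ∀ (ν : S → ℝ) (x : X), ehat ν x = e₀ x + γ * ν (st' x) - ν (st x))
    (Z : (S → ℝ) → ℝ)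
    (hZ : ∀ ν : S → ℝ, Z ν = ∑ x, c x * Real.exp (ehat ν x / α))
    (L : (S → ℝ) → ℝ)
    (hL : ∀ ν : S → ℝ,
      L ν = (1 - γ) * ∑ s, p₀ s * ν s + α * ∑ x, c x * Real.exp (ehat ν x / α - 1))
    (Ltil : (S → ℝ) → ℝ)
    (hLtil : ∀ ν : S → ℝ,
      Ltil ν = (1 - γ) * ∑ s, p₀ s * ν s + α * Real.log (Z ν))
    (νstar : S → ℝ) (hνstar : ∀ ν : S → ℝ, L νstar ≤ L ν)
    (νtil : S → ℝ) (hνtil : ∀ ν : S → ℝ, Ltil νtil ≤ Ltil ν) :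
    L νstar = Ltil νtil := by
  obtain rfl : ehat = advantage γ st st' e₀ := funext fun ν => funext (hehat ν)
  obtain rfl : Z = partitionValue α γ c st st' e₀ := funext hZ
  obtain rfl : L = objective α γ c st st' e₀ p₀ := funext hL
  obtain rfl : Ltil = logObjective α γ c st st' e₀ p₀ := funext hLtil
  refine le_antisymm ?_ ((hνtil νstar).trans (logObjective_le_objective hα hc hc0 νstar))
  have hC : (1 - γ) * (α * (log (partitionValue α γ c st st' e₀ νtil) - 1) / (1 - γ)) =
      α * (log (partitionValue α γ c st st' e₀ νtil) - 1) := mul_div_cancel₀ _ (by linarith)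
  exact (hνstar _).trans (objective_add_const_eq_logObjective hα hc hc0 hp₀sum νtil hC).le

/-- If `ν*` minimizes `L` and `ν̃*` minimizes `𝓛̃`, then `L(ν*) = 𝓛̃(ν̃*)`. -/
theorem stmt_12 {S X : Type*} [Fintype S] [Fintype X] [Nonempty S] [Nonempty X]
    (α γ : ℝ) (hα : 0 < α) (hγ0 : 0 < γ) (hγ1 : γ < 1)
    (c : X → ℝ) (hc : ∀ x, 0 ≤ c x) (hc0 : ∃ x₀, 0 < c x₀)
    (st st' : X → S) (e₀ : X → ℝ)
    (p₀ : S → ℝ) (hp₀ : ∀ s, 0 ≤ p₀ s) (hp₀sum : ∑ s, p₀ s = 1)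
    (ehat : (S → ℝ) → X → ℝ)
    (hehat : ∀ (ν : S → ℝ) (x : X), ehat ν x = e₀ x + γ * ν (st' x) - ν (st x))
    (Z : (S → ℝ) → ℝ)
    (hZ : ∀ ν : S → ℝ, Z ν = ∑ x, c x * Real.exp (ehat ν x / α))
    (L : (S → ℝ) → ℝ)
    (hL : ∀ ν : S → ℝ,
      L ν = (1 - γ) * ∑ s, p₀ s * ν s + α * ∑ x, c x * Real.exp (ehat ν x / α - 1))
    (Ltil : (S → ℝ) → ℝ)
    (hLtil : ∀ ν : S → ℝ,
      Ltil ν = (1 - γ) * ∑ s, p₀ s * ν s + α * Real.log (Z ν))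
    (νstar : S → ℝ) (hνstar : ∀ ν : S → ℝ, L νstar ≤ L ν)
    (νtil : S → ℝ) (hνtil : ∀ ν : S → ℝ, Ltil νtil ≤ Ltil ν) :
    L νstar = Ltil νtil :=
  stmt_12_general α γ hα hγ1 c hc hc0 st st' e₀ p₀ hp₀sum ehat hehat Z hZ L hL Ltil hLtil νstar
    hνstar νtil hνtil
end

section
/- If ν* : S → ℝ is a global minimizer of L, then for every constant C ∈ ℝ the shifted function ν* + C is a global minimizer of 𝓛̃: 𝓛̃(ν* + C) ≤ 𝓛̃(ν) for all ν : S → ℝ. -/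
/-- If `ν*` is a global minimizer of `L`, then for every constant `C`, `ν* + C` is a global minimizer of `𝓛̃`. -/
theorem stmt_13 {S X : Type*} [Fintype S] [Fintype X] [Nonempty S] [Nonempty X]
    (α γ : ℝ) (hα : 0 < α) (hγ0 : 0 < γ) (hγ1 : γ < 1)
    (c : X → ℝ) (hc : ∀ x, 0 ≤ c x) (hc0 : ∃ x₀, 0 < c x₀)
    (st st' : X → S) (e₀ : X → ℝ)
    (p₀ : S → ℝ) (hp₀ : ∀ s, 0 ≤ p₀ s) (hp₀sum : ∑ s, p₀ s = 1)
    (ehat : (S → ℝ) → X → ℝ)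
    (hehat : ∀ (ν : S → ℝ) (x : X), ehat ν x = e₀ x + γ * ν (st' x) - ν (st x))
    (Z : (S → ℝ) → ℝ)
    (hZ : ∀ ν : S → ℝ, Z ν = ∑ x, c x * Real.exp (ehat ν x / α))
    (L : (S → ℝ) → ℝ)
    (hL : ∀ ν : S → ℝ,
      L ν = (1 - γ) * ∑ s, p₀ s * ν s + α * ∑ x, c x * Real.exp (ehat ν x / α - 1))
    (Ltil : (S → ℝ) → ℝ)
    (hLtil : ∀ ν : S → ℝ,
      Ltil ν = (1 - γ) * ∑ s, p₀ s * ν s + α * Real.log (Z ν))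
    (νstar : S → ℝ) (hνstar : ∀ ν : S → ℝ, L νstar ≤ L ν) :
    ∀ (C : ℝ) (ν : S → ℝ), Ltil (fun s => νstar s + C) ≤ Ltil ν := by
  have hαne : α ≠ 0 := ne_of_gt hα
  -- Z is positive
  have hZpos : ∀ w : S → ℝ, 0 < Z w := by
    intro w
    rw [hZ]
    obtain ⟨x₀, hx₀⟩ := hc0
    refine Finset.sum_pos' (fun x _ => ?_) ⟨x₀, Finset.mem_univ _, ?_⟩
    · have := hc x; positivity
    · positivity
  -- L in terms of Z
  have hL' : ∀ w : S → ℝ, L w = (1 - γ) * ∑ s, p₀ s * w s + α * Real.exp (-1) * Z w := by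
    intro w
    have key : ∑ x, c x * Real.exp (ehat w x / α - 1)
        = Real.exp (-1) * ∑ x, c x * Real.exp (ehat w x / α) := by
      rw [Finset.mul_sum]
      refine Finset.sum_congr rfl fun x _ => ?_
      rw [show ehat w x / α - 1 = -1 + ehat w x / α by ring, Real.exp_add]
      ring
    rw [hL, hZ, key]; ring
  -- shift of ehat
  have hshift : ∀ (w : S → ℝ) (t : ℝ) (x : X),
      ehat (fun s => w s + t) x = ehat w x - (1 - γ) * t := by
    intro w t x; rw [hehat, hehat]; ring
  -- shift of Z
  have hZshift : ∀ (w : S → ℝ) (t : ℝ),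
      Z (fun s => w s + t) = Z w * Real.exp (-((1 - γ) * t) / α) := by
    intro w t
    rw [hZ, hZ, Finset.sum_mul]
    refine Finset.sum_congr rfl fun x _ => ?_
    rw [hshift, show (ehat w x - (1 - γ) * t) / α = ehat w x / α + -((1 - γ) * t) / α by
      field_simp; ring, Real.exp_add]
    ring
  -- shift of the linear part
  have hlinshift : ∀ (w : S → ℝ) (t : ℝ),
      ∑ s, p₀ s * (w s + t) = (∑ s, p₀ s * w s) + t := by
    intro w t
    have : ∑ s, p₀ s * (w s + t) = (∑ s, p₀ s * w s) + (∑ s, p₀ s) * t := by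
      rw [Finset.sum_mul, ← Finset.sum_add_distrib]
      exact Finset.sum_congr rfl fun s _ => by ring
    rw [this, hp₀sum, one_mul]
  -- Ltil is shift invariant
  have hLtilshift : ∀ (w : S → ℝ) (t : ℝ), Ltil (fun s => w s + t) = Ltil w := by
    intro w t
    rw [hLtil, hLtil, hZshift, hlinshift,
      Real.log_mul (ne_of_gt (hZpos w)) (Real.exp_ne_zero _), Real.log_exp]
    field_simp
    ring
  -- Ltil ≤ L
  have hle : ∀ w : S → ℝ, Ltil w ≤ L w := by
    intro w
    rw [hLtil, hL']
    have hlog : Real.log (Z w) ≤ Real.exp (-1) * Z w := by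
      have h := Real.log_le_sub_one_of_pos (x := Z w * Real.exp (-1))
        (mul_pos (hZpos w) (Real.exp_pos _))
      rw [Real.log_mul (ne_of_gt (hZpos w)) (Real.exp_ne_zero _), Real.log_exp] at h
      linarith
    have := mul_le_mul_of_nonneg_left hlog (le_of_lt hα)
    linarith [this]
  intro C ν
  -- optimal shift for ν
  set t : ℝ := α * (Real.log (Z ν) - 1) / (1 - γ) with ht
  have h1γ : (1 : ℝ) - γ ≠ 0 := by linarith
  have hLopt : L (fun s => ν s + t) = Ltil ν := by
    rw [hL', hZshift, hlinshift, hLtil]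
    have ht1 : (1 - γ) * t = α * (Real.log (Z ν) - 1) := by
      rw [ht]; field_simp
    have ht2 : -((1 - γ) * t) / α = 1 - Real.log (Z ν) := by
      rw [ht1]; field_simp; ring
    have hE : Real.exp (-((1 - γ) * t) / α) = Real.exp 1 / Z ν := by
      rw [ht2, Real.exp_sub, Real.exp_log (hZpos ν)]
    rw [hE]
    have h2 : α * Real.exp (-1) * (Z ν * (Real.exp 1 / Z ν)) = α := by
      rw [Real.exp_neg]
      field_simp [ne_of_gt (hZpos ν)]
    rw [h2, mul_add, ht1]
    ring
  calc Ltil (fun s => νstar s + C) = Ltil νstar := hLtilshift νstar C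
    _ ≤ L νstar := hle νstar
    _ ≤ L (fun s => ν s + t) := hνstar _
    _ = Ltil ν := hLopt
end
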